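/- arXiv:2007.10810 — 5 statements merged into one kernel-verified Lean document; each statement's English description precedes it below -/
import Mathlib

section
/- In a pentagonal geometry PENT(k,r), if two points x and y have the same opposite line x^opp = y^opp = l, then x and y are collinear, and letting m be the line through x and y, every point z on l satisfies z^opp = m and every point w on m satisfies w^opp = l. -/
open scoped Classical

/-- A pentagonal geometry PENT(k,r). -/
structure PentGeom (V : Type) [Fintype V] [DecidableEq V] (k r : ℕ) : Type where
  lines : Finset (Finset V)
  size_pos : 2 ≤ k
  rep_pos : 1 ≤ r
  pairwise : ∀ x y : V, x ≠ y → (lines.filter (fun l => x ∈ l ∧ y ∈ l)).card ≤ 1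
  uniform : ∀ l ∈ lines, l.card = k
  regular : ∀ x : V, (lines.filter (fun l => x ∈ l)).card = r
  opp : ∀ x : V,
    (Finset.univ.filter (fun y => y ≠ x ∧ ∀ l ∈ lines, ¬(x ∈ l ∧ y ∈ l))) ∈ lines

variable {V : Type} [Fintype V] [DecidableEq V] {k r : ℕ}

/-- The opposite line of a point. -/
def PentGeom.oppLine (P : PentGeom V k r) (x : V) : Finset V :=
  Finset.univ.filter (fun y => y ≠ x ∧ ∀ l ∈ P.lines, ¬(x ∈ l ∧ y ∈ l))

/-- Two points are collinear if some line contains both. -/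
def PentGeom.Collinear (P : PentGeom V k r) (x y : V) : Prop :=
  x ≠ y ∧ ∃ l ∈ P.lines, x ∈ l ∧ y ∈ l

/-- An opposite line pair. -/
def PentGeom.OppPair (P : PentGeom V k r) (l m : Finset V) : Prop :=
  l ∈ P.lines ∧ m ∈ P.lines ∧ l ≠ m ∧
    (∀ x ∈ l, P.oppLine x = m) ∧ (∀ y ∈ m, P.oppLine y = l)


lemma PentGeom.mem_oppLine {P : PentGeom V k r} {x y : V} :
    y ∈ P.oppLine x ↔ y ≠ x ∧ ∀ l ∈ P.lines, ¬(x ∈ l ∧ y ∈ l) := by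
  simp [PentGeom.oppLine]

lemma PentGeom.oppLine_mem (P : PentGeom V k r) (x : V) : P.oppLine x ∈ P.lines :=
  P.opp x

lemma PentGeom.line_unique (P : PentGeom V k r) {x y : V} {l1 l2 : Finset V}
    (hxy : x ≠ y) (h1 : l1 ∈ P.lines) (h2 : l2 ∈ P.lines)
    (hx1 : x ∈ l1) (hy1 : y ∈ l1) (hx2 : x ∈ l2) (hy2 : y ∈ l2) : l1 = l2 := by
  by_contra hne
  have hsub : {l1, l2} ⊆ P.lines.filter (fun l => x ∈ l ∧ y ∈ l) := by
    intro t ht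
    simp only [Finset.mem_insert, Finset.mem_singleton] at ht
    rcases ht with rfl | rfl <;> simp [Finset.mem_filter, *]
  have := Finset.card_le_card hsub
  rw [Finset.card_insert_of_notMem (by simpa using hne), Finset.card_singleton] at this
  have := P.pairwise x y hxy
  omega

/-- if two points x ≠ y have the same opposite line l, then x and y are
collinear, and the line m through x and y satisfies: every z ∈ l has opposite line m and
every w ∈ m has opposite line l. -/
theorem stmt2 (k r : ℕ) (V : Type) [Fintype V] [DecidableEq V] (P : PentGeom V k r)
    (x y : V) (l : Finset V) (hxy : x ≠ y)
    (hx : P.oppLine x = l) (hy : P.oppLine y = l) :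
    P.Collinear x y ∧
    ∃ m ∈ P.lines, x ∈ m ∧ y ∈ m ∧
      (∀ z ∈ l, P.oppLine z = m) ∧ (∀ w ∈ m, P.oppLine w = l) := by
  -- x and y are collinear
  have hcol : ∃ m ∈ P.lines, x ∈ m ∧ y ∈ m := by
    by_contra hno
    push_neg at hno
    have hy' : y ∈ P.oppLine x := by
      rw [PentGeom.mem_oppLine]
      exact ⟨hxy.symm, fun l hl ⟨h1, h2⟩ => hno l hl h1 h2⟩
    rw [hx, ← hy, PentGeom.mem_oppLine] at hy'
    exact hy'.1 rfl
  obtain ⟨m, hm, hxm, hym⟩ := hcol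
  have hl : l ∈ P.lines := hx ▸ P.oppLine_mem x
  have hzl : ∀ z ∈ l, P.oppLine z = m := by
    intro z hz
    have hzx := hz; rw [← hx, PentGeom.mem_oppLine] at hzx
    have hzy := hz; rw [← hy, PentGeom.mem_oppLine] at hzy
    have hxz : x ∈ P.oppLine z := by
      rw [PentGeom.mem_oppLine]
      exact ⟨hzx.1.symm, fun t ht ⟨h1, h2⟩ => hzx.2 t ht ⟨h2, h1⟩⟩
    have hyz : y ∈ P.oppLine z := by
      rw [PentGeom.mem_oppLine]
      exact ⟨hzy.1.symm, fun t ht ⟨h1, h2⟩ => hzy.2 t ht ⟨h2, h1⟩⟩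
    exact P.line_unique hxy (P.oppLine_mem z) hm hxz hyz hxm hym
  have hwm : ∀ w ∈ m, P.oppLine w = l := by
    intro w hw
    have hsub : l ⊆ P.oppLine w := by
      intro z hz
      have hw' := hw
      rw [← hzl z hz, PentGeom.mem_oppLine] at hw'
      rw [PentGeom.mem_oppLine]
      exact ⟨hw'.1.symm, fun t ht ⟨h1, h2⟩ => hw'.2 t ht ⟨h2, h1⟩⟩
    refine (Finset.eq_of_subset_of_card_le hsub ?_).symm
    rw [P.uniform l hl, P.uniform _ (P.oppLine_mem w)]
  exact ⟨⟨hxy, m, hm, hxm, hym⟩, m, hm, hxm, hym, hzl, hwm⟩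
end

section
/- In a pentagonal geometry PENT(k,r) with 1 < r < 3k, either there are no opposite line pairs, or r = 2k+1 and the point set is partitioned into opposite line pairs. -/
open scoped Classical

variable {V : Type} [Fintype V] [DecidableEq V] {k r : ℕ}

namespace PentGeom

variable (P : PentGeom V k r)

lemma mem_oppLine_iff {x y : V} :
    y ∈ P.oppLine x ↔ y ≠ x ∧ ∀ l ∈ P.lines, ¬(x ∈ l ∧ y ∈ l) := by
  simp [oppLine]

lemma oppLine_mem_s3 (x : V) : P.oppLine x ∈ P.lines := P.opp x

lemma oppLine_card (x : V) : (P.oppLine x).card = k := P.uniform _ (P.opp x)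

lemma not_mem_oppLine_self (x : V) : x ∉ P.oppLine x := by
  simp [mem_oppLine_iff]

lemma mem_oppLine_symm {x y : V} (h : y ∈ P.oppLine x) : x ∈ P.oppLine y := by
  rw [mem_oppLine_iff] at h ⊢
  exact ⟨h.1.symm, fun l hl hmem => h.2 l hl ⟨hmem.2, hmem.1⟩⟩

lemma line_unique_s3 {l m : Finset V} {x y : V} (hl : l ∈ P.lines) (hm : m ∈ P.lines)
    (hxl : x ∈ l) (hyl : y ∈ l) (hxm : x ∈ m) (hym : y ∈ m) (hxy : x ≠ y) : l = m :=
  Finset.card_le_one.mp (P.pairwise x y hxy) l (Finset.mem_filter.mpr ⟨hl, hxl, hyl⟩)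
    m (Finset.mem_filter.mpr ⟨hm, hxm, hym⟩)

lemma exists_line {x y : V} (hxy : y ≠ x) (h : y ∉ P.oppLine x) :
    ∃ e ∈ P.lines, x ∈ e ∧ y ∈ e := by
  rw [mem_oppLine_iff] at h
  push_neg at h
  obtain ⟨e, he, h1, h2⟩ := h hxy
  exact ⟨e, he, h1, h2⟩

lemma oppPair_symm {l m : Finset V} (h : P.OppPair l m) : P.OppPair m l :=
  ⟨h.2.1, h.1, h.2.2.1.symm, h.2.2.2.2, h.2.2.2.1⟩

end PentGeom

namespace PentGeom

lemma card_meeting (P : PentGeom V k r) {l : Finset V} (hl : l ∈ P.lines) {z : V} (hz : z ∉ l)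
    (hcoll : ∀ p ∈ l, p ∉ P.oppLine z) :
    (P.lines.filter (fun e => z ∈ e ∧ (e ∩ l).Nonempty)).card = k := by
  have key : ∀ p ∈ l, ∃ e ∈ P.lines, z ∈ e ∧ p ∈ e := by
    intro p hp
    have hpz : p ≠ z := fun h => hz (h ▸ hp)
    exact P.exists_line hpz (hcoll p hp)
  have hbij : l.card = (P.lines.filter (fun e => z ∈ e ∧ (e ∩ l).Nonempty)).card := by
    apply Finset.card_bij (fun p hp => (key p hp).choose)
    · intro p hp
      obtain ⟨he, hze, hpe⟩ := (key p hp).choose_spec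
      exact Finset.mem_filter.mpr ⟨he, hze, ⟨p, Finset.mem_inter.mpr ⟨hpe, hp⟩⟩⟩
    · intro p₁ hp₁ p₂ hp₂ heq
      by_contra hne
      obtain ⟨he₁, hze₁, hpe₁⟩ := (key p₁ hp₁).choose_spec
      obtain ⟨he₂, hze₂, hpe₂⟩ := (key p₂ hp₂).choose_spec
      rw [heq] at hpe₁
      have := P.line_unique_s3 he₂ hl hpe₁ hpe₂ hp₁ hp₂ hne
      exact hz (this ▸ hze₂)
    · intro e he
      obtain ⟨he', hze, q, hq⟩ := Finset.mem_filter.mp he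
      obtain ⟨hqe, hql⟩ := Finset.mem_inter.mp hq
      refine ⟨q, hql, ?_⟩
      obtain ⟨hc, hzc, hqc⟩ := (key q hql).choose_spec
      have hne : z ≠ q := by rintro rfl; exact hz hql
      exact P.line_unique_s3 hc he' hzc hqc hze hqe hne
  rw [← hbij, P.uniform l hl]

lemma card_univ_eq (P : PentGeom V k r) (x : V) :
    Fintype.card V = 1 + k + r * (k - 1) := by
  classical
  set T := (P.lines.filter (fun e => x ∈ e)).biUnion (fun e => e.erase x) with hT
  have hTcard : T.card = r * (k - 1) := by
    rw [hT, Finset.card_biUnion]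
    · rw [Finset.sum_congr rfl (fun e he => ?_), Finset.sum_const, P.regular x, smul_eq_mul]
      obtain ⟨he, hxe⟩ := Finset.mem_filter.mp he
      rw [Finset.card_erase_of_mem hxe, P.uniform e he]
    · intro e he f hf hef
      obtain ⟨he', hxe⟩ := Finset.mem_filter.mp he
      obtain ⟨hf', hxf⟩ := Finset.mem_filter.mp hf
      refine Finset.disjoint_left.mpr (fun {y} hy hy' => ?_)
      obtain ⟨hyx, hye⟩ := Finset.mem_erase.mp hy
      obtain ⟨_, hyf⟩ := Finset.mem_erase.mp hy'
      exact hef (P.line_unique_s3 he' hf' hxe hye hxf hyf (Ne.symm hyx))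
  have hdisj1 : Disjoint (P.oppLine x) T := by
    refine Finset.disjoint_left.mpr (fun {y} hy hy' => ?_)
    obtain ⟨e, he, hye⟩ := Finset.mem_biUnion.mp hy'
    obtain ⟨he', hxe⟩ := Finset.mem_filter.mp he
    exact ((P.mem_oppLine_iff.mp hy).2 e he') ⟨hxe, (Finset.mem_erase.mp hye).2⟩
  have hdisj2 : Disjoint {x} (P.oppLine x ∪ T) := by
    refine Finset.disjoint_left.mpr (fun {y} hy hy' => ?_)
    rw [Finset.mem_singleton] at hy
    subst hy
    rcases Finset.mem_union.mp hy' with h | h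
    · exact P.not_mem_oppLine_self y h
    · obtain ⟨e, he, hye⟩ := Finset.mem_biUnion.mp h
      exact (Finset.mem_erase.mp hye).1 rfl
  have huniv : ({x} : Finset V) ∪ (P.oppLine x ∪ T) = Finset.univ := by
    ext y
    simp only [Finset.mem_union, Finset.mem_singleton, Finset.mem_univ, iff_true]
    by_cases hyx : y = x
    · exact Or.inl hyx
    · by_cases hyo : y ∈ P.oppLine x
      · exact Or.inr (Or.inl hyo)
      · obtain ⟨e, he, hxe, hye⟩ := P.exists_line hyx hyo
        exact Or.inr (Or.inr (Finset.mem_biUnion.mpr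
          ⟨e, Finset.mem_filter.mpr ⟨he, hxe⟩, Finset.mem_erase.mpr ⟨hyx, hye⟩⟩))
  have := Finset.card_union_of_disjoint hdisj2
  rw [huniv] at this
  rw [← Finset.card_univ, this, Finset.card_union_of_disjoint hdisj1,
    Finset.card_singleton, P.oppLine_card, hTcard, add_assoc]

end PentGeom

namespace PentGeom

lemma not_meet_oppLine (P : PentGeom V k r) {l m : Finset V} (hpair : P.OppPair l m)
    {z : V} (hzl : z ∉ l) (hzm : z ∉ m) {w : V} (hw : w ∈ P.oppLine z) :
    (P.oppLine w ∩ l) = ∅ ∧ (P.oppLine w ∩ m) = ∅ := by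
  have hzw : z ∈ P.oppLine w := P.mem_oppLine_symm hw
  constructor
  · by_contra h
    obtain ⟨p, hp⟩ := Finset.nonempty_iff_ne_empty.mpr h
    obtain ⟨hpw, hpl⟩ := Finset.mem_inter.mp hp
    have h1 : w ∈ P.oppLine p := P.mem_oppLine_symm hpw
    rw [hpair.2.2.2.1 p hpl] at h1
    have h2 : P.oppLine w = l := hpair.2.2.2.2 w h1
    exact hzl (h2 ▸ hzw)
  · by_contra h
    obtain ⟨p, hp⟩ := Finset.nonempty_iff_ne_empty.mpr h
    obtain ⟨hpw, hpm⟩ := Finset.mem_inter.mp hp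
    have h1 : w ∈ P.oppLine p := P.mem_oppLine_symm hpw
    rw [hpair.2.2.2.2 p hpm] at h1
    have h2 : P.oppLine w = m := hpair.2.2.2.1 w h1
    exact hzm (h2 ▸ hzw)

lemma coll_of_pair (P : PentGeom V k r) {l m : Finset V} (hpair : P.OppPair l m)
    {z : V} (hzm : z ∉ m) : ∀ p ∈ l, p ∉ P.oppLine z := by
  intro p hpl hp
  have : z ∈ P.oppLine p := P.mem_oppLine_symm hp
  rw [hpair.2.2.2.1 p hpl] at this
  exact hzm this

lemma pair_through_point (P : PentGeom V k r) (hex : ∃ l m : Finset V, P.OppPair l m)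
    (hr2 : r < 3 * k) (z : V) :
    ∃ a b : Finset V, P.OppPair a b ∧ z ∈ a := by
  obtain ⟨l, m, hpair⟩ := hex
  by_cases hzl : z ∈ l
  · exact ⟨l, m, hpair, hzl⟩
  by_cases hzm : z ∈ m
  · exact ⟨m, l, P.oppPair_symm hpair, hzm⟩
  -- z outside both lines
  have hk : 2 ≤ k := P.size_pos
  set Lz := P.lines.filter (fun e => z ∈ e) with hLz
  set A := P.lines.filter (fun e => z ∈ e ∧ (e ∩ l).Nonempty) with hA
  set B := P.lines.filter (fun e => z ∈ e ∧ (e ∩ m).Nonempty) with hB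
  have hAcard : A.card = k := P.card_meeting hpair.1 hzl (P.coll_of_pair hpair hzm)
  have hBcard : B.card = k :=
    P.card_meeting hpair.2.1 hzm (P.coll_of_pair (P.oppPair_symm hpair) hzl)
  have hABdisj : Disjoint A B := by
    refine Finset.disjoint_left.mpr (fun {e} he he' => ?_)
    obtain ⟨he1, hze, p, hp⟩ := Finset.mem_filter.mp he
    obtain ⟨_, _, q, hq⟩ := Finset.mem_filter.mp he'
    obtain ⟨hpe, hpl⟩ := Finset.mem_inter.mp hp
    obtain ⟨hqe, hqm⟩ := Finset.mem_inter.mp hq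
    have : q ∈ P.oppLine p := by rw [hpair.2.2.2.1 p hpl]; exact hqm
    exact (P.mem_oppLine_iff.mp this).2 e he1 ⟨hpe, hqe⟩
  have hABsub : A ∪ B ⊆ Lz := by
    intro e he
    rcases Finset.mem_union.mp he with h | h
    · obtain ⟨h1, h2, _⟩ := Finset.mem_filter.mp h
      exact Finset.mem_filter.mpr ⟨h1, h2⟩
    · obtain ⟨h1, h2, _⟩ := Finset.mem_filter.mp h
      exact Finset.mem_filter.mpr ⟨h1, h2⟩
  have hLzcard : Lz.card = r := P.regular z
  have hmaps : ∀ w ∈ P.oppLine z, P.oppLine w ∈ Lz \ (A ∪ B) := by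
    intro w hw
    obtain ⟨h1, h2⟩ := P.not_meet_oppLine hpair hzl hzm hw
    refine Finset.mem_sdiff.mpr ⟨Finset.mem_filter.mpr
      ⟨P.oppLine_mem_s3 w, P.mem_oppLine_symm hw⟩, ?_⟩
    intro hmem
    rcases Finset.mem_union.mp hmem with h | h
    · obtain ⟨_, _, hne⟩ := Finset.mem_filter.mp h
      rw [h1] at hne
      exact Finset.not_nonempty_empty hne
    · obtain ⟨_, _, hne⟩ := Finset.mem_filter.mp h
      rw [h2] at hne
      exact Finset.not_nonempty_empty hne
  have hsd : (Lz \ (A ∪ B)).card < (P.oppLine z).card := by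
    rw [Finset.card_sdiff_of_subset hABsub, hLzcard, Finset.card_union_of_disjoint hABdisj,
      hAcard, hBcard, P.oppLine_card]
    omega
  obtain ⟨w, hw, w', hw', hne, heq⟩ :=
    Finset.exists_ne_map_eq_of_card_lt_of_maps_to hsd hmaps
  set n := P.oppLine w with hn
  have hzn : z ∈ n := P.mem_oppLine_symm hw
  have step1 : ∀ u ∈ n, P.oppLine u = P.oppLine z := by
    intro u hu
    have huw : w ∈ P.oppLine u := P.mem_oppLine_symm hu
    have huw' : w' ∈ P.oppLine u := P.mem_oppLine_symm (heq ▸ hu)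
    exact P.line_unique_s3 (P.oppLine_mem_s3 u) (P.oppLine_mem_s3 z) huw huw' hw hw' hne
  have step2 : ∀ p ∈ P.oppLine z, P.oppLine p = n := by
    intro p hp
    have hsub : n ⊆ P.oppLine p := by
      intro u hu
      have : p ∈ P.oppLine u := (step1 u hu) ▸ hp
      exact P.mem_oppLine_symm this
    exact (Finset.eq_of_subset_of_card_le hsub
      (by rw [P.oppLine_card, P.oppLine_card])).symm
  refine ⟨n, P.oppLine z, ⟨P.oppLine_mem_s3 w, P.oppLine_mem_s3 z, ?_, step1, step2⟩, hzn⟩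
  intro h
  exact P.not_mem_oppLine_self z (h ▸ hzn)

lemma pair_unique (P : PentGeom V k r) {a b c d : Finset V} (h1 : P.OppPair a b)
    (h2 : P.OppPair c d) {z : V} (hza : z ∈ a) (hzc : z ∈ c) : a = c ∧ b = d := by
  have hb : b = P.oppLine z := (h1.2.2.2.1 z hza).symm
  have hd : d = P.oppLine z := (h2.2.2.2.1 z hzc).symm
  have hbd : b = d := hb.trans hd.symm
  have hbne : b.Nonempty := by
    rw [← Finset.card_pos, P.uniform b h1.2.1]
    have := P.size_pos; omega
  obtain ⟨p, hp⟩ := hbne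
  have ha : P.oppLine p = a := h1.2.2.2.2 p hp
  have hc : P.oppLine p = c := h2.2.2.2.2 p (hbd ▸ hp)
  exact ⟨ha ▸ hc, hbd⟩

end PentGeom

namespace PentGeom

lemma two_k_dvd (P : PentGeom V k r) (hex : ∃ l m : Finset V, P.OppPair l m)
    (hr2 : r < 3 * k) : 2 * k ∣ Fintype.card V := by
  classical
  have hpt : ∀ z : V, ∃ ab : Finset V × Finset V, P.OppPair ab.1 ab.2 ∧ z ∈ ab.1 := by
    intro z
    obtain ⟨a, b, h, hz⟩ := P.pair_through_point hex hr2 z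
    exact ⟨(a, b), h, hz⟩
  choose F hF using hpt
  set g : V → Finset V := fun z => (F z).1 ∪ (F z).2 with hg
  have hfiber : ∀ z : V, Finset.univ.filter (fun y => g y = g z) = g z := by
    intro z
    ext y
    simp only [Finset.mem_filter, Finset.mem_univ, true_and]
    constructor
    · intro hy
      rw [← hy, hg]
      exact Finset.mem_union_left _ (hF y).2
    · intro hy
      rcases Finset.mem_union.mp hy with hy1 | hy2
      · obtain ⟨e1, e2⟩ := P.pair_unique (hF y).1 (hF z).1 (hF y).2 hy1
        simp only [hg]
        rw [e1, e2]
      · obtain ⟨e1, e2⟩ := P.pair_unique (hF y).1 (P.oppPair_symm (hF z).1) (hF y).2 hy2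
        simp only [hg]
        rw [e1, e2, Finset.union_comm]
  have hcard : ∀ z : V, (g z).card = 2 * k := by
    intro z
    have hdisj : Disjoint (F z).1 (F z).2 := by
      refine Finset.disjoint_left.mpr (fun {p} hp hp' => ?_)
      have : P.oppLine p = (F z).2 := (hF z).1.2.2.2.1 p hp
      exact P.not_mem_oppLine_self p (this ▸ hp')
    rw [hg]
    simp only
    rw [Finset.card_union_of_disjoint hdisj, P.uniform _ (hF z).1.1,
      P.uniform _ (hF z).1.2.1]
    ring
  have hmaps : ∀ z ∈ (Finset.univ : Finset V), g z ∈ Finset.univ.image g :=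
    fun z hz => Finset.mem_image_of_mem g hz
  have := Finset.card_eq_sum_card_fiberwise hmaps
  rw [← Finset.card_univ, this]
  have hsum : ∀ U ∈ Finset.univ.image g,
      (Finset.univ.filter (fun y => g y = U)).card = 2 * k := by
    intro U hU
    obtain ⟨z, _, rfl⟩ := Finset.mem_image.mp hU
    rw [hfiber z, hcard z]
  rw [Finset.sum_congr rfl hsum, Finset.sum_const, smul_eq_mul]
  exact Dvd.intro_left _ rfl

lemma r_lower (P : PentGeom V k r) (hex : ∃ l m : Finset V, P.OppPair l m)
    (hr1 : 1 < r) (hr2 : r < 3 * k) : 2 * k + 1 ≤ r := by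
  classical
  obtain ⟨l, m, hpair⟩ := hex
  have hk : 2 ≤ k := P.size_pos
  -- there is a point outside l ∪ m
  have hlne : l.Nonempty := by
    rw [← Finset.card_pos, P.uniform l hpair.1]; omega
  obtain ⟨x0, hx0⟩ := hlne
  have hv : Fintype.card V = 1 + k + r * (k - 1) := P.card_univ_eq x0
  have hlm : (l ∪ m).card ≤ 2 * k := by
    calc (l ∪ m).card ≤ l.card + m.card := Finset.card_union_le l m
    _ = 2 * k := by rw [P.uniform l hpair.1, P.uniform m hpair.2.1]; ring
  have hvbig : 2 * k < Fintype.card V := by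
    have h2 : 2 * (k - 1) ≤ r * (k - 1) := Nat.mul_le_mul_right _ (by omega)
    omega
  have hzex : ∃ z : V, z ∉ l ∪ m := by
    by_contra h
    push_neg at h
    have : (Finset.univ : Finset V) ⊆ l ∪ m := fun y _ => h y
    have := Finset.card_le_card this
    rw [Finset.card_univ] at this
    omega
  obtain ⟨z, hz⟩ := hzex
  have hzl : z ∉ l := fun h => hz (Finset.mem_union_left _ h)
  have hzm : z ∉ m := fun h => hz (Finset.mem_union_right _ h)
  set Lz := P.lines.filter (fun e => z ∈ e) with hLzdef
  set A := P.lines.filter (fun e => z ∈ e ∧ (e ∩ l).Nonempty) with hA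
  set B := P.lines.filter (fun e => z ∈ e ∧ (e ∩ m).Nonempty) with hB
  have hAcard : A.card = k := P.card_meeting hpair.1 hzl (P.coll_of_pair hpair hzm)
  have hBcard : B.card = k :=
    P.card_meeting hpair.2.1 hzm (P.coll_of_pair (P.oppPair_symm hpair) hzl)
  have hABdisj : Disjoint A B := by
    refine Finset.disjoint_left.mpr (fun {e} he he' => ?_)
    obtain ⟨he1, hze, p, hp⟩ := Finset.mem_filter.mp he
    obtain ⟨_, _, q, hq⟩ := Finset.mem_filter.mp he'
    obtain ⟨hpe, hpl⟩ := Finset.mem_inter.mp hp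
    obtain ⟨hqe, hqm⟩ := Finset.mem_inter.mp hq
    have : q ∈ P.oppLine p := by rw [hpair.2.2.2.1 p hpl]; exact hqm
    exact (P.mem_oppLine_iff.mp this).2 e he1 ⟨hpe, hqe⟩
  -- z's own opposite pair gives one more line through z
  obtain ⟨a, b, hzpair, hza⟩ := P.pair_through_point ⟨l, m, hpair⟩ hr2 z
  have hbne : b.Nonempty := by
    rw [← Finset.card_pos, P.uniform b hzpair.2.1]; omega
  have haA : a ∉ A := by
    intro h
    obtain ⟨_, _, p, hp⟩ := Finset.mem_filter.mp h
    obtain ⟨hpa, hpl⟩ := Finset.mem_inter.mp hp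
    have hbm : b = m := by
      rw [← hzpair.2.2.2.1 p hpa, hpair.2.2.2.1 p hpl]
    obtain ⟨q, hq⟩ := hbne
    have : P.oppLine q = a := hzpair.2.2.2.2 q hq
    rw [hpair.2.2.2.2 q (hbm ▸ hq)] at this
    exact hzl (this ▸ hza)
  have haB : a ∉ B := by
    intro h
    obtain ⟨_, _, p, hp⟩ := Finset.mem_filter.mp h
    obtain ⟨hpa, hpm⟩ := Finset.mem_inter.mp hp
    have hbl : b = l := by
      rw [← hzpair.2.2.2.1 p hpa, hpair.2.2.2.2 p hpm]
    obtain ⟨q, hq⟩ := hbne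
    have : P.oppLine q = a := hzpair.2.2.2.2 q hq
    rw [hpair.2.2.2.1 q (hbl ▸ hq)] at this
    exact hzm (this ▸ hza)
  have haLz : a ∈ Lz := Finset.mem_filter.mpr ⟨hzpair.1, hza⟩
  have hsub : insert a (A ∪ B) ⊆ Lz := by
    intro e he
    rcases Finset.mem_insert.mp he with rfl | he'
    · exact haLz
    · rcases Finset.mem_union.mp he' with h | h
      · obtain ⟨h1, h2, _⟩ := Finset.mem_filter.mp h
        exact Finset.mem_filter.mpr ⟨h1, h2⟩
      · obtain ⟨h1, h2, _⟩ := Finset.mem_filter.mp h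
        exact Finset.mem_filter.mpr ⟨h1, h2⟩
  have hinscard : (insert a (A ∪ B)).card = 2 * k + 1 := by
    rw [Finset.card_insert_of_notMem (fun h => ?_),
      Finset.card_union_of_disjoint hABdisj, hAcard, hBcard]
    · ring
    · rcases Finset.mem_union.mp h with h' | h'
      · exact haA h'
      · exact haB h'
  have := Finset.card_le_card hsub
  rw [hinscard, P.regular z] at this
  exact this

end PentGeom

namespace PentGeom

lemma r_eq (P : PentGeom V k r) (hex : ∃ l m : Finset V, P.OppPair l m)
    (hr1 : 1 < r) (hr2 : r < 3 * k) : r = 2 * k + 1 := by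
  have hk : 2 ≤ k := P.size_pos
  have hlow : 2 * k + 1 ≤ r := P.r_lower hex hr1 hr2
  obtain ⟨t, ht⟩ := P.two_k_dvd hex hr2
  obtain ⟨l, m, hpair⟩ := hex
  have hlne : l.Nonempty := by
    rw [← Finset.card_pos, P.uniform l hpair.1]; omega
  obtain ⟨x0, _⟩ := hlne
  have hv : Fintype.card V = 1 + k + r * (k - 1) := P.card_univ_eq x0
  obtain ⟨j, rfl⟩ : ∃ j, k = j + 1 := ⟨k - 1, by omega⟩
  simp only [Nat.add_sub_cancel] at hv
  set s := r - (2 * (j + 1) + 1) with hs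
  have hr : r = 2 * (j + 1) + 1 + s := by omega
  have hz1 : (Fintype.card V : ℤ) = 1 + ((j : ℤ) + 1) + r * j := by
    rw [hv]; push_cast; ring
  have hz2 : (Fintype.card V : ℤ) = 2 * ((j : ℤ) + 1) * t := by
    rw [ht]; push_cast; ring
  have hz3 : (r : ℤ) = 2 * ((j : ℤ) + 1) + 1 + s := by
    rw [hr]; push_cast; ring
  have hdvdZ : ((j : ℤ) + 1) ∣ ((s : ℤ) * j) := by
    refine ⟨2 * t - 2 * ((j : ℤ) + 1), ?_⟩
    linear_combination hz2 - hz1 - (j : ℤ) * hz3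
  have hdvdN : (j + 1) ∣ s * j := by
    have : ((j + 1 : ℕ) : ℤ) ∣ ((s * j : ℕ) : ℤ) := by push_cast; exact hdvdZ
    exact_mod_cast this
  have hcop : Nat.Coprime (j + 1) j := by simp [Nat.coprime_self_add_left]
  have hdvds : (j + 1) ∣ s := hcop.dvd_of_dvd_mul_right hdvdN
  have hs0 : s = 0 := Nat.eq_zero_of_dvd_of_lt hdvds (by omega)
  omega

end PentGeom


/-- In a pentagonal geometry PENT(k,r) with 1 < r < 3k, either there are no
opposite line pairs, or r = 2k+1 and the point set is partitioned into opposite line pairs. -/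
theorem stmt3 (k r : ℕ) (V : Type) [Fintype V] [DecidableEq V] (P : PentGeom V k r)
    (hr1 : 1 < r) (hr2 : r < 3 * k) :
    (¬ ∃ l m : Finset V, P.OppPair l m) ∨
    (r = 2 * k + 1 ∧ ∀ x : V, ∃ l m : Finset V, P.OppPair l m ∧ (x ∈ l ∨ x ∈ m)) := by
  by_cases hex : ∃ l m : Finset V, P.OppPair l m
  · refine Or.inr ⟨P.r_eq hex hr1 hr2, fun x => ?_⟩
    obtain ⟨a, b, hab, hxa⟩ := P.pair_through_point hex hr2 x
    exact ⟨a, b, hab, Or.inl hxa⟩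
  · exact Or.inl hex
end

section
/- A pentagonal geometry PENT(2,r) is equivalent to a complete graph on r+3 vertices from which the edge set of a 2-regular spanning subgraph with no cycle of length 3 (a disjoint union of cycles each of length ≥ 4 or 5, none of size 3) has been deleted, with lines being the remaining edges. -/
open scoped Classical

variable {V : Type} [Fintype V] [DecidableEq V] {k r : ℕ}

/-!
The points not collinear with `x` form the line `oppLine x`, of size `2`. So the deficiency graph
(non-collinearity) of a PENT(2,r) is `2`-regular, and it is triangle-free because two points
opposite to `x` are collinear, on `oppLine x`. Conversely, if `H` is `2`-regular and triangle-free
on `r + 3` points, the non-edges of `H` are lines of size `2`, each point lies on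
`(r + 3) - 1 - 2 = r` of them, and the two points not collinear with `x` are its two
`H`-neighbours, which are not adjacent in `H` and hence form a line.
-/

lemma Finset.eq_pair_of_card_eq_two {α : Type*} [DecidableEq α] {s : Finset α} {x y : α}
    (hs : s.card = 2) (hxy : x ≠ y) (hx : x ∈ s) (hy : y ∈ s) : s = {x, y} :=
  (Finset.eq_of_subset_of_card_le (Finset.insert_subset hx (Finset.singleton_subset_iff.mpr hy))
    (by rw [hs, Finset.card_pair hxy])).symm

namespace SimpleGraph

variable {α : Type*} {G : SimpleGraph α}

lemma cliqueFree_three_iff :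
    G.CliqueFree 3 ↔ ∀ x y z : α, ¬(G.Adj x y ∧ G.Adj y z ∧ G.Adj x z) := by
  classical
  simp only [CliqueFree, is3Clique_iff]
  constructor
  · exact fun h x y z ⟨hxy, hyz, hxz⟩ => h {x, y, z} ⟨x, y, z, hxy, hxz, hyz, rfl⟩
  · rintro h - ⟨x, y, z, hxy, hxz, hyz, rfl⟩
    exact h x y z ⟨hxy, hyz, hxz⟩

variable [Fintype α]

lemma isRegularOfDegree_iff_card_filter_adj [DecidableRel G.Adj] {d : ℕ} :
    G.IsRegularOfDegree d ↔ ∀ v, (Finset.univ.filter (fun w => G.Adj v w)).card = d := by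
  simp only [IsRegularOfDegree, ← card_neighborFinset_eq_degree, neighborFinset_eq_filter]

variable [DecidableEq α] [DecidableRel G.Adj] {x y : α}

def edgePairs (G : SimpleGraph α) [DecidableRel G.Adj] : Finset (Finset α) :=
  Finset.univ.filter fun l => ∃ x y, G.Adj x y ∧ l = {x, y}

lemma mem_edgePairs {l : Finset α} : l ∈ G.edgePairs ↔ ∃ x y, G.Adj x y ∧ l = {x, y} := by
  simp [edgePairs]

lemma card_of_mem_edgePairs {l : Finset α} (hl : l ∈ G.edgePairs) : l.card = 2 := by
  obtain ⟨x, y, hxy, rfl⟩ := mem_edgePairs.mp hl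
  exact Finset.card_pair hxy.ne

lemma pair_mem_edgePairs_iff : ({x, y} : Finset α) ∈ G.edgePairs ↔ G.Adj x y := by
  refine ⟨fun h => ?_, fun h => mem_edgePairs.mpr ⟨x, y, h, rfl⟩⟩
  have hxy : x ≠ y := by
    rintro rfl
    simpa using card_of_mem_edgePairs h
  obtain ⟨a, b, hab, hpair⟩ := mem_edgePairs.mp h
  have hx : x ∈ ({a, b} : Finset α) := hpair ▸ by simp
  have hy : y ∈ ({a, b} : Finset α) := hpair ▸ by simp
  simp only [Finset.mem_insert, Finset.mem_singleton] at hx hy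
  rcases hx with rfl | rfl <;> rcases hy with rfl | rfl
  exacts [absurd rfl hxy, hab, hab.symm, absurd rfl hxy]

lemma eq_pair_of_mem_edgePairs {l : Finset α} (hl : l ∈ G.edgePairs) (hxy : x ≠ y) (hx : x ∈ l)
    (hy : y ∈ l) : l = {x, y} :=
  Finset.eq_pair_of_card_eq_two (card_of_mem_edgePairs hl) hxy hx hy

lemma exists_mem_edgePairs_iff (hxy : x ≠ y) :
    (∃ l ∈ G.edgePairs, x ∈ l ∧ y ∈ l) ↔ G.Adj x y := by
  refine ⟨fun ⟨l, hl, hx, hy⟩ => ?_, fun h => ⟨_, pair_mem_edgePairs_iff.mpr h, by simp, by simp⟩⟩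
  rwa [eq_pair_of_mem_edgePairs hl hxy hx hy, pair_mem_edgePairs_iff] at hl

lemma card_filter_mem_edgePairs (x : α) :
    (G.edgePairs.filter (x ∈ ·)).card = G.degree x := by
  have himage : G.edgePairs.filter (x ∈ ·) = (G.neighborFinset x).image (fun y => {x, y}) := by
    ext l
    simp only [Finset.mem_filter, Finset.mem_image, mem_neighborFinset]
    constructor
    · rintro ⟨hl, hx⟩
      obtain ⟨a, b, hab, rfl⟩ := mem_edgePairs.mp hl
      rcases Finset.mem_insert.mp hx with rfl | hb
      · exact ⟨b, hab, rfl⟩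
      · rw [Finset.mem_singleton.mp hb]
        exact ⟨a, hab.symm, Finset.pair_comm _ _⟩
    · rintro ⟨y, hy, rfl⟩
      exact ⟨pair_mem_edgePairs_iff.mpr hy, by simp⟩
  rw [himage, Finset.card_image_of_injOn, card_neighborFinset_eq_degree]
  intro a ha b _ hab
  have : a ∈ ({x, b} : Finset α) := by simp only at hab; simp [← hab]
  simp only [Finset.mem_insert, Finset.mem_singleton] at this
  exact this.resolve_left (G.ne_of_adj (mem_neighborFinset _ _ _ |>.mp ha)).symm

lemma filter_not_exists_mem_compl_edgePairs (H : SimpleGraph α) [DecidableRel H.Adj] (x : α) :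
    Finset.univ.filter (fun y => y ≠ x ∧ ∀ l ∈ Hᶜ.edgePairs, ¬(x ∈ l ∧ y ∈ l)) =
      H.neighborFinset x := by
  ext y
  simp only [Finset.mem_filter, Finset.mem_univ, true_and, mem_neighborFinset]
  by_cases hxy : x = y
  · simp [hxy]
  · have key := exists_mem_edgePairs_iff (G := Hᶜ) hxy
    rw [compl_adj, and_iff_right hxy] at key
    simpa [Ne.symm hxy] using not_congr key

lemma neighborFinset_mem_compl_edgePairs {H : SimpleGraph α} [DecidableRel H.Adj]
    (h2 : H.IsRegularOfDegree 2) (h3 : H.CliqueFree 3) (x : α) :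
    H.neighborFinset x ∈ Hᶜ.edgePairs := by
  obtain ⟨a, b, hab, hN⟩ := Finset.card_eq_two.mp ((H.card_neighborFinset_eq_degree x).trans (h2 x))
  have ha : H.Adj x a := (H.mem_neighborFinset x a).mp (by simp [hN])
  have hb : H.Adj x b := (H.mem_neighborFinset x b).mp (by simp [hN])
  rw [hN, pair_mem_edgePairs_iff, compl_adj]
  exact ⟨hab, fun h => (cliqueFree_three_iff.mp h3) x a b ⟨ha, h, hb⟩⟩

end SimpleGraph

namespace PentGeom

variable (P : PentGeom V k r) {x y : V}

def deficiencyGraph : SimpleGraph V where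
  Adj x y := x ≠ y ∧ ¬P.Collinear x y
  symm := ⟨fun _ _ ⟨hxy, h⟩ => ⟨hxy.symm, fun ⟨_, l, hl, hy, hx⟩ => h ⟨hxy, l, hl, hx, hy⟩⟩⟩
  loopless := ⟨fun _ h => h.1 rfl⟩

lemma mem_oppLine_iff_s6 : y ∈ P.oppLine x ↔ P.deficiencyGraph.Adj x y := by
  simp only [oppLine, Finset.mem_filter, Finset.mem_univ, true_and, deficiencyGraph, Collinear,
    ne_comm (a := y)]
  refine and_congr_right fun hxy => ?_
  simp [hxy]

lemma deficiencyGraph_isRegularOfDegree : P.deficiencyGraph.IsRegularOfDegree k := by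
  refine SimpleGraph.isRegularOfDegree_iff_card_filter_adj.mpr fun x => ?_
  have : Finset.univ.filter (P.deficiencyGraph.Adj x) = P.oppLine x := by
    ext y
    simp [mem_oppLine_iff_s6]
  rw [this]
  exact P.uniform _ (P.opp x)

lemma deficiencyGraph_cliqueFree : P.deficiencyGraph.CliqueFree 3 :=
  SimpleGraph.cliqueFree_three_iff.mpr fun x _ _ ⟨hxy, hyz, hxz⟩ =>
    hyz.2 ⟨hyz.1, P.oppLine x, P.opp x, P.mem_oppLine_iff_s6.mpr hxy, P.mem_oppLine_iff_s6.mpr hxz⟩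

lemma pair_mem_lines_iff (P : PentGeom V 2 r) (hxy : x ≠ y) :
    ({x, y} : Finset V) ∈ P.lines ↔ ¬P.deficiencyGraph.Adj x y := by
  simp only [deficiencyGraph, hxy, ne_eq, not_false_eq_true, true_and, not_not]
  refine ⟨fun h => ⟨hxy, _, h, by simp, by simp⟩, fun ⟨_, l, hl, hx, hy⟩ => ?_⟩
  rwa [← Finset.eq_pair_of_card_eq_two (P.uniform l hl) hxy hx hy]

noncomputable def ofDeficiencyGraph (H : SimpleGraph V) [DecidableRel H.Adj]
    (hV : Fintype.card V = r + 3) (hr : 1 ≤ r) (h2 : H.IsRegularOfDegree 2)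
    (h3 : H.CliqueFree 3) : PentGeom V 2 r where
  lines := Hᶜ.edgePairs
  size_pos := le_rfl
  rep_pos := hr
  pairwise x y hxy := Finset.card_le_one.mpr fun l hl m hm => by
    simp only [Finset.mem_filter] at hl hm
    rw [Hᶜ.eq_pair_of_mem_edgePairs hl.1 hxy hl.2.1 hl.2.2,
      Hᶜ.eq_pair_of_mem_edgePairs hm.1 hxy hm.2.1 hm.2.2]
  uniform _ := Hᶜ.card_of_mem_edgePairs
  regular x := by
    rw [Hᶜ.card_filter_mem_edgePairs x, H.degree_compl, h2 x, hV]
    omega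
  opp x := by
    rw [H.filter_not_exists_mem_compl_edgePairs x]
    exact SimpleGraph.neighborFinset_mem_compl_edgePairs h2 h3 x

lemma pair_mem_ofDeficiencyGraph_lines_iff (H : SimpleGraph V) [DecidableRel H.Adj]
    (hV : Fintype.card V = r + 3) (hr : 1 ≤ r) (h2 : H.IsRegularOfDegree 2)
    (h3 : H.CliqueFree 3) (hxy : x ≠ y) :
    ({x, y} : Finset V) ∈ (ofDeficiencyGraph H hV hr h2 h3).lines ↔ ¬H.Adj x y := by
  change _ ∈ Hᶜ.edgePairs ↔ _
  rw [SimpleGraph.pair_mem_edgePairs_iff, SimpleGraph.compl_adj]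
  exact and_iff_right hxy

end PentGeom

/-- A pentagonal geometry PENT(2,r) is equivalent to a complete graph on r+3
vertices from which the edge set of a 2-regular spanning subgraph with no 3-cycle has been
deleted, the lines being the remaining edges. -/
theorem stmt6 (r : ℕ) (V : Type) [Fintype V] [DecidableEq V]
    (hV : Fintype.card V = r + 3) (hr : 1 ≤ r) :
    (∀ P : PentGeom V 2 r, ∃ H : SimpleGraph V,
      (∀ v : V, (Finset.univ.filter (fun w => H.Adj v w)).card = 2) ∧
      (∀ x y z : V, ¬(H.Adj x y ∧ H.Adj y z ∧ H.Adj x z)) ∧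
      (∀ x y : V, x ≠ y → (({x, y} : Finset V) ∈ P.lines ↔ ¬ H.Adj x y))) ∧
    (∀ H : SimpleGraph V,
      (∀ v : V, (Finset.univ.filter (fun w => H.Adj v w)).card = 2) →
      (∀ x y z : V, ¬(H.Adj x y ∧ H.Adj y z ∧ H.Adj x z)) →
      ∃ P : PentGeom V 2 r,
        ∀ x y : V, x ≠ y → (({x, y} : Finset V) ∈ P.lines ↔ ¬ H.Adj x y)) := by
  refine ⟨fun P => ⟨P.deficiencyGraph, ?_, ?_, fun x y => P.pair_mem_lines_iff⟩, fun H h2 h3 => ?_⟩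
  · exact SimpleGraph.isRegularOfDegree_iff_card_filter_adj.mp P.deficiencyGraph_isRegularOfDegree
  · exact SimpleGraph.cliqueFree_three_iff.mp P.deficiencyGraph_cliqueFree
  · have h2' := SimpleGraph.isRegularOfDegree_iff_card_filter_adj.mpr h2
    have h3' := SimpleGraph.cliqueFree_three_iff.mpr h3
    exact ⟨.ofDeficiencyGraph H hV hr h2' h3', fun x y =>
      PentGeom.pair_mem_ofDeficiencyGraph_lines_iff H hV hr h2' h3'⟩
end

section
/- In the GDD construction of a pentagonal geometry (placing PENT(k,r_i) on each group of a k-GDD of type v_1^1⋯v_n^1 with v_i = (k-1)r_i+(k+1) and adjoining the GDD blocks), the number of opposite line pairs of the resulting pentagonal geometry equals the sum of the numbers of opposite line pairs of the constituent geometries PENT(k,r_i). -/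
open scoped Classical

variable {V : Type} [Fintype V] [DecidableEq V] {k r : ℕ}

/-- A k-group divisible design. -/
structure GDDesign (V : Type) [Fintype V] [DecidableEq V] (k : ℕ) : Type where
  groups : Finset (Finset V)
  blocks : Finset (Finset V)
  groupsPartition : ∀ x : V, (groups.filter (fun g => x ∈ g)).card = 1
  blockSize : ∀ b ∈ blocks, b.card = k
  cover : ∀ x y : V, x ≠ y →
    (groups.filter (fun g => x ∈ g ∧ y ∈ g)).card +
      (blocks.filter (fun b => x ∈ b ∧ y ∈ b)).card = 1

variable {V : Type} [Fintype V] [DecidableEq V]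

/-- The opposite line of `x` relative to a family of lines `L` on a point set `W`. -/
noncomputable def oppLineIn (L : Finset (Finset V)) (W : Finset V) (x : V) : Finset V :=
  W.filter (fun y => y ≠ x ∧ ∀ l ∈ L, ¬(x ∈ l ∧ y ∈ l))

/-- A pentagonal geometry PENT(k,r) with line family `L` on the point set `W`. -/
def IsPentOn (W : Finset V) (k r : ℕ) (L : Finset (Finset V)) : Prop :=
  (∀ l ∈ L, l ⊆ W ∧ l.card = k) ∧
  (∀ x y : V, x ∈ W → y ∈ W → x ≠ y → (L.filter (fun l => x ∈ l ∧ y ∈ l)).card ≤ 1) ∧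
  (∀ x ∈ W, (L.filter (fun l => x ∈ l)).card = r) ∧
  (∀ x ∈ W, oppLineIn L W x ∈ L)

/-- The ordered opposite line pairs of the line family `L` on point set `W`;
the cardinality is twice the number of (unordered) opposite line pairs. -/
noncomputable def olpOrderedIn (L : Finset (Finset V)) (W : Finset V) :
    Finset (Finset V × Finset V) :=
  (L ×ˢ L).filter (fun p => p.1 ≠ p.2 ∧
    (∀ x ∈ p.1, oppLineIn L W x = p.2) ∧ (∀ y ∈ p.2, oppLineIn L W y = p.1))

/-!
Two points in different groups of the GDD are joined by a block, while two points of one group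
are joined only by lines of that group's geometry. Hence the opposite line of a point is the
opposite line it has in its own group, and every opposite line pair of the big geometry is an
opposite line pair of exactly one group geometry.
-/

namespace GDDesign

variable {k : ℕ} (D : GDDesign V k)

theorem exists_mem_groups (x : V) : ∃ g ∈ D.groups, x ∈ g := by
  obtain ⟨g, hg⟩ := Finset.card_pos.1 (D.groupsPartition x ▸ Nat.one_pos)
  exact ⟨g, (Finset.mem_filter.1 hg).1, (Finset.mem_filter.1 hg).2⟩

theorem eq_of_mem_groups {g h : Finset V} (hg : g ∈ D.groups) (hh : h ∈ D.groups) {x : V}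
    (hxg : x ∈ g) (hxh : x ∈ h) : g = h :=
  Finset.card_le_one.1 (D.groupsPartition x).le g (Finset.mem_filter.2 ⟨hg, hxg⟩) h
    (Finset.mem_filter.2 ⟨hh, hxh⟩)

theorem notMem_block_of_mem_group {g : Finset V} (hg : g ∈ D.groups) {x y : V}
    (hx : x ∈ g) (hy : y ∈ g) (hxy : x ≠ y) {b : Finset V} (hb : b ∈ D.blocks) :
    ¬(x ∈ b ∧ y ∈ b) := by
  intro hxyb
  have hgroup : 0 < (D.groups.filter fun h => x ∈ h ∧ y ∈ h).card :=
    Finset.card_pos.2 ⟨g, Finset.mem_filter.2 ⟨hg, hx, hy⟩⟩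
  have hblock : 0 < (D.blocks.filter fun c => x ∈ c ∧ y ∈ c).card :=
    Finset.card_pos.2 ⟨b, Finset.mem_filter.2 ⟨hb, hxyb⟩⟩
  have := D.cover x y hxy
  omega

theorem exists_block_of_notMem_group {g : Finset V} (hg : g ∈ D.groups) {x y : V}
    (hx : x ∈ g) (hy : y ∉ g) : ∃ b ∈ D.blocks, x ∈ b ∧ y ∈ b := by
  have hnogroup : D.groups.filter (fun h => x ∈ h ∧ y ∈ h) = ∅ :=
    Finset.filter_eq_empty_iff.2 fun h hh hxyh =>
      hy (D.eq_of_mem_groups hg hh hx hxyh.1 ▸ hxyh.2)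
  have hcover := D.cover x y (fun hxy => hy (hxy ▸ hx))
  rw [hnogroup, Finset.card_empty, zero_add] at hcover
  obtain ⟨b, hb⟩ := Finset.card_pos.1 (hcover ▸ Nat.one_pos)
  exact ⟨b, (Finset.mem_filter.1 hb).1, (Finset.mem_filter.1 hb).2⟩

theorem existsUnique_mem_of_groups_eq_image {ι : Type} [Fintype ι] {f : ι → Finset V}
    (hf : Function.Injective f) (hgroups : D.groups = Finset.image f Finset.univ) (x : V) :
    ∃! i, x ∈ f i := by
  have hmem : ∀ i, f i ∈ D.groups := fun i =>
    hgroups ▸ Finset.mem_image_of_mem f (Finset.mem_univ i)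
  obtain ⟨g, hg, hxg⟩ := D.exists_mem_groups x
  obtain ⟨i, -, rfl⟩ := Finset.mem_image.1 (hgroups ▸ hg)
  exact ⟨i, hxg, fun j hxj => hf (D.eq_of_mem_groups (hmem j) (hmem i) hxj hxg)⟩

end GDDesign

theorem oppLineIn_univ_eq_of_local {M L : Finset (Finset V)} {W : Finset V} {x : V}
    (hLM : L ⊆ M) (hout : ∀ y ∉ W, ∃ l ∈ M, x ∈ l ∧ y ∈ l)
    (hin : ∀ l ∈ M, ∀ y ∈ W, y ≠ x → x ∈ l → y ∈ l → l ∈ L) :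
    oppLineIn M Finset.univ x = oppLineIn L W x := by
  ext y
  simp only [oppLineIn, Finset.mem_filter, Finset.mem_univ, true_and]
  constructor
  · rintro ⟨hyx, hnoM⟩
    have hyW : y ∈ W := by
      by_contra hyW
      obtain ⟨l, hl, hxyl⟩ := hout y hyW
      exact hnoM l hl hxyl
    exact ⟨hyW, hyx, fun l hl => hnoM l (hLM hl)⟩
  · rintro ⟨hyW, hyx, hnoL⟩
    exact ⟨hyx, fun l hl hxyl => hnoL l (hin l hl y hyW hyx hxyl.1 hxyl.2) hxyl⟩

theorem mem_olpOrderedIn {L : Finset (Finset V)} {W l m : Finset V} :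
    (l, m) ∈ olpOrderedIn L W ↔ l ∈ L ∧ m ∈ L ∧ l ≠ m ∧
      (∀ x ∈ l, oppLineIn L W x = m) ∧ (∀ y ∈ m, oppLineIn L W y = l) := by
  simp only [olpOrderedIn, Finset.mem_filter, Finset.mem_product, and_assoc]

section Decomposition

variable {ι : Type} [Fintype ι] {W : ι → Finset V} {M : Finset (Finset V)}
  {L : ι → Finset (Finset V)}

theorem olpOrderedIn_univ_eq_biUnion (hW : ∀ x, ∃ i, x ∈ W i)
    (hM : ∀ l ∈ M, l.Nonempty) (hLM : ∀ i, L i ⊆ M) (hLW : ∀ i, ∀ l ∈ L i, l ⊆ W i)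
    (hopp : ∀ i, ∀ x ∈ W i, oppLineIn (L i) (W i) x ∈ L i)
    (hloc : ∀ i, ∀ x ∈ W i, oppLineIn M Finset.univ x = oppLineIn (L i) (W i) x) :
    olpOrderedIn M Finset.univ = Finset.univ.biUnion fun i => olpOrderedIn (L i) (W i) := by
  ext ⟨l, m⟩
  simp only [Finset.mem_biUnion, Finset.mem_univ, true_and, mem_olpOrderedIn]
  constructor
  · rintro ⟨hl, hm, hlm, hoppl, hoppm⟩
    obtain ⟨x, hxl⟩ := hM l hl
    obtain ⟨i, hxi⟩ := hW x
    have hmi : m ∈ L i := hoppl x hxl ▸ hloc i x hxi ▸ hopp i x hxi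
    obtain ⟨y, hym⟩ := hM m hm
    have hyi := hLW i m hmi hym
    have hli : l ∈ L i := hoppm y hym ▸ hloc i y hyi ▸ hopp i y hyi
    refine ⟨i, hli, hmi, hlm, fun x' hx' => ?_, fun y' hy' => ?_⟩
    · rw [← hloc i x' (hLW i l hli hx')]; exact hoppl x' hx'
    · rw [← hloc i y' (hLW i m hmi hy')]; exact hoppm y' hy'
  · rintro ⟨i, hli, hmi, hlm, hoppl, hoppm⟩
    refine ⟨hLM i hli, hLM i hmi, hlm, fun x hx => ?_, fun y hy => ?_⟩
    · rw [hloc i x (hLW i l hli hx)]; exact hoppl x hx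
    · rw [hloc i y (hLW i m hmi hy)]; exact hoppm y hy

theorem card_olpOrderedIn_univ_eq_sum (hW : ∀ x, ∃! i, x ∈ W i)
    (hM : ∀ l ∈ M, l.Nonempty) (hLM : ∀ i, L i ⊆ M) (hLW : ∀ i, ∀ l ∈ L i, l ⊆ W i)
    (hopp : ∀ i, ∀ x ∈ W i, oppLineIn (L i) (W i) x ∈ L i)
    (hloc : ∀ i, ∀ x ∈ W i, oppLineIn M Finset.univ x = oppLineIn (L i) (W i) x) :
    (olpOrderedIn M Finset.univ).card = ∑ i, (olpOrderedIn (L i) (W i)).card := by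
  rw [olpOrderedIn_univ_eq_biUnion (fun x => (hW x).exists) hM hLM hLW hopp hloc]
  refine Finset.card_biUnion fun i _ j _ hij => Finset.disjoint_left.2 ?_
  rintro ⟨l, m⟩ hpi hpj
  have hli := (mem_olpOrderedIn.1 hpi).1
  have hlj := (mem_olpOrderedIn.1 hpj).1
  obtain ⟨x, hx⟩ := hM l (hLM i hli)
  exact hij ((hW x).unique (hLW i l hli hx) (hLW j l hlj hx))

end Decomposition

theorem stmt13_general (k : ℕ) (n : ℕ) (r : Fin n → ℕ)
    (D : GDDesign V k)
    (f : Fin n → Finset V) (hf : Function.Injective f)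
    (hgroups : D.groups = Finset.image f Finset.univ)
    (L : Fin n → Finset (Finset V)) (hL : ∀ i, IsPentOn (f i) k (r i) (L i))
    (R : ℕ) (P : PentGeom V k R)
    (hlines : P.lines = D.blocks ∪ Finset.univ.biUnion L) :
    (olpOrderedIn P.lines Finset.univ).card = ∑ i, (olpOrderedIn (L i) (f i)).card := by
  have hW := D.existsUnique_mem_of_groups_eq_image hf hgroups
  have hgroup : ∀ i, f i ∈ D.groups := fun i =>
    hgroups ▸ Finset.mem_image_of_mem f (Finset.mem_univ i)
  have hblock : ∀ b ∈ D.blocks, b ∈ P.lines := fun b hb =>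
    hlines ▸ Finset.mem_union_left _ hb
  have hLP : ∀ i, L i ⊆ P.lines := fun i l hl =>
    hlines ▸ Finset.mem_union_right _ (Finset.mem_biUnion.2 ⟨i, Finset.mem_univ i, hl⟩)
  have hLf : ∀ i, ∀ l ∈ L i, l ⊆ f i := fun i l hl => ((hL i).1 l hl).1
  refine card_olpOrderedIn_univ_eq_sum hW ?_ hLP hLf (fun i => (hL i).2.2.2) fun i x hx => ?_
  · intro l hl
    exact Finset.card_pos.1 (by rw [P.uniform l hl]; have := P.size_pos; omega)
  refine oppLineIn_univ_eq_of_local (hLP i) (fun y hy => ?_) fun l hl y hy hyx hxl hyl => ?_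
  · obtain ⟨b, hb, hxyb⟩ := D.exists_block_of_notMem_group (hgroup i) hx hy
    exact ⟨b, hblock b hb, hxyb⟩
  · rw [hlines, Finset.mem_union, Finset.mem_biUnion] at hl
    rcases hl with hb | ⟨j, -, hlj⟩
    · exact absurd ⟨hxl, hyl⟩ (D.notMem_block_of_mem_group (hgroup i) hx hy hyx.symm hb)
    · rwa [(hW x).unique hx (hLf j l hlj hxl)]

/-- in the GDD construction (a PENT(k,rᵢ) on each group of a k-GDD of type
v₁¹⋯vₙ¹, vᵢ = (k-1)rᵢ+(k+1), together with the GDD blocks), the number of opposite line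
pairs of the resulting pentagonal geometry is the sum of the numbers of opposite line
pairs of the constituents. -/
theorem stmt13 (k : ℕ) (hk : 2 ≤ k) (n : ℕ) (r : Fin n → ℕ) (hr : ∀ i, 1 ≤ r i)
    (v : Fin n → ℕ) (hv : ∀ i, v i = (k - 1) * r i + (k + 1))
    (D : GDDesign V k)
    (f : Fin n → Finset V) (hf : Function.Injective f)
    (hgroups : D.groups = Finset.image f Finset.univ)
    (hsizes : ∀ i, (f i).card = v i)
    (L : Fin n → Finset (Finset V)) (hL : ∀ i, IsPentOn (f i) k (r i) (L i))
    (R : ℕ) (P : PentGeom V k R)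
    (hlines : P.lines = D.blocks ∪ Finset.univ.biUnion L) :
    (olpOrderedIn P.lines Finset.univ).card = ∑ i, (olpOrderedIn (L i) (f i)).card :=
  stmt13_general k n r D f hf hgroups L hL R P hlines
end

section
/- Let (Q,·) be a commutative idempotent quasigroup of odd order v ≥ 3 and let V = Q × Z_3. Define triples P = {{(x,0),(x,1),(x,2)} : x ∈ Q} and S = {{(x,i),(y,i),(x·y, i+1)} : x,y ∈ Q, x ≠ y, i ∈ Z_3} (with second coordinates mod 3). Then (V, P ∪ S) is a Steiner triple system of order 3v: every pair of distinct points of V lies in exactly one triple. -/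
/-!
Every triple of the construction lies either in a single fibre `{x} × ℤ₃` (a point triple) or has
three distinct first coordinates `x, y, x·y` (a level triple; they are distinct because `Q` is an
idempotent quasigroup). So two points of one fibre lie only in its point triple. Two points
`(x,i), (y,i)` on a common level lie only in the level triple they span, since the apex of a
level triple is alone on its level. Finally `(x,i)` and `(y,i+1)` lie only in the level triple
over `x` and the unique solution `s` of `x·s = y`; the remaining case `(x,i), (y,i-1)` is this
one with the points exchanged.
-/

/-- The family of triples of the Bose construction on `Q × ZMod 3`:
the "point" triples {(x,0),(x,1),(x,2)} and the "quasigroup" triples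
{(x,i),(y,i),(x·y,i+1)} for x ≠ y. -/
def BoseTriples {Q : Type} [DecidableEq Q] (mul : Q → Q → Q) (t : Finset (Q × ZMod 3)) : Prop :=
  (∃ x : Q, t = {(x, 0), (x, 1), (x, 2)}) ∨
  (∃ (x y : Q) (i : ZMod 3), x ≠ y ∧ t = {(x, i), (y, i), (mul x y, i + 1)})

namespace Bose

variable {Q : Type} {mul : Q → Q → Q}

theorem mul_ne_left (hidem : ∀ x, mul x x = x) (hquasi : ∀ a b, ∃! x, mul a x = b) {x y : Q}
    (h : x ≠ y) : mul x y ≠ x :=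
  fun he => h ((hquasi x x).unique (hidem x) he)

theorem mul_ne_right (hcomm : ∀ x y, mul x y = mul y x) (hidem : ∀ x, mul x x = x)
    (hquasi : ∀ a b, ∃! x, mul a x = b) {x y : Q} (h : x ≠ y) : mul x y ≠ y := by
  rw [hcomm]
  exact mul_ne_left hidem hquasi h.symm

theorem zmod3_add_one_ne_self : ∀ i : ZMod 3, i + 1 ≠ i := by decide

theorem zmod3_add_one_add_one_ne_self : ∀ i : ZMod 3, i + 1 + 1 ≠ i := by decide

theorem zmod3_eq_add_one_of_ne_of_ne_add_one : ∀ i j : ZMod 3, i ≠ j → j ≠ i + 1 → i = j + 1 := by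
  decide

variable [DecidableEq Q]

def pointTriple (x : Q) : Finset (Q × ZMod 3) := {(x, 0), (x, 1), (x, 2)}

variable (mul) in
def levelTriple (x y : Q) (i : ZMod 3) : Finset (Q × ZMod 3) :=
  {(x, i), (y, i), (mul x y, i + 1)}

theorem boseTriples_iff {t : Finset (Q × ZMod 3)} :
    BoseTriples mul t ↔
      (∃ x, t = pointTriple x) ∨ ∃ x y i, x ≠ y ∧ t = levelTriple mul x y i :=
  Iff.rfl

@[simp]
theorem mem_pointTriple {p : Q × ZMod 3} {x : Q} : p ∈ pointTriple x ↔ p.1 = x := by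
  obtain ⟨y, j⟩ := p
  simp only [pointTriple, Finset.mem_insert, Finset.mem_singleton, Prod.mk.injEq, ← and_or_left,
    and_iff_left_iff_imp]
  intro
  decide +revert

@[simp]
theorem mem_levelTriple {p : Q × ZMod 3} {x y : Q} {i : ZMod 3} :
    p ∈ levelTriple mul x y i ↔ p = (x, i) ∨ p = (y, i) ∨ p = (mul x y, i + 1) := by
  simp [levelTriple]

theorem levelTriple_comm (hcomm : ∀ x y, mul x y = mul y x) (x y : Q) (i : ZMod 3) :
    levelTriple mul x y i = levelTriple mul y x i := by
  rw [levelTriple, levelTriple, Finset.insert_comm, hcomm]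

theorem eq_of_mk_mem_levelTriple (hcomm : ∀ x y, mul x y = mul y x) (hidem : ∀ x, mul x x = x)
    (hquasi : ∀ a b, ∃! x, mul a x = b) {a b x : Q} {i j k : ZMod 3} (hab : a ≠ b)
    (hi : (x, i) ∈ levelTriple mul a b k) (hj : (x, j) ∈ levelTriple mul a b k) : i = j := by
  have := mul_ne_left hidem hquasi hab
  have := mul_ne_right hcomm hidem hquasi hab
  simp only [mem_levelTriple, Prod.mk.injEq] at hi hj
  grind

theorem levelTriple_eq_of_mem_of_mem (hcomm : ∀ x y, mul x y = mul y x) {a b x y : Q}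
    {i k : ZMod 3} (hxy : x ≠ y) (hx : (x, i) ∈ levelTriple mul a b k)
    (hy : (y, i) ∈ levelTriple mul a b k) :
    levelTriple mul a b k = levelTriple mul x y i := by
  have := zmod3_add_one_ne_self k
  simp only [mem_levelTriple, Prod.mk.injEq] at hx hy
  rcases hx with ⟨rfl, rfl⟩ | ⟨rfl, rfl⟩ | ⟨rfl, rfl⟩ <;> grind [levelTriple_comm]

theorem exists_levelTriple_eq_of_mem_of_mem_add_one (hcomm : ∀ x y, mul x y = mul y x)
    {a b x y : Q} {i k : ZMod 3} (hx : (x, i) ∈ levelTriple mul a b k)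
    (hy : (y, i + 1) ∈ levelTriple mul a b k) :
    ∃ c, mul x c = y ∧ levelTriple mul a b k = levelTriple mul x c i := by
  have := zmod3_add_one_ne_self k
  have := zmod3_add_one_add_one_ne_self k
  simp only [mem_levelTriple, Prod.mk.injEq] at hx hy
  rcases hx with ⟨rfl, rfl⟩ | ⟨rfl, rfl⟩ | ⟨rfl, rfl⟩ <;> grind [levelTriple_comm]

theorem existsUnique_boseTriple_of_fst_eq (hcomm : ∀ x y, mul x y = mul y x)
    (hidem : ∀ x, mul x x = x) (hquasi : ∀ a b, ∃! x, mul a x = b) {x : Q} {i j : ZMod 3}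
    (hij : i ≠ j) : ∃! t, BoseTriples mul t ∧ (x, i) ∈ t ∧ (x, j) ∈ t := by
  refine ⟨pointTriple x, ⟨Or.inl ⟨x, rfl⟩, by simp, by simp⟩, ?_⟩
  rintro t ⟨ht, hi, hj⟩
  rcases boseTriples_iff.mp ht with ⟨a, rfl⟩ | ⟨a, b, k, hab, rfl⟩
  · obtain rfl : x = a := mem_pointTriple.mp hi
    rfl
  · exact absurd (eq_of_mk_mem_levelTriple hcomm hidem hquasi hab hi hj) hij

theorem existsUnique_boseTriple_of_snd_eq (hcomm : ∀ x y, mul x y = mul y x) {x y : Q}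
    (hxy : x ≠ y) (i : ZMod 3) : ∃! t, BoseTriples mul t ∧ (x, i) ∈ t ∧ (y, i) ∈ t := by
  refine ⟨levelTriple mul x y i, ⟨Or.inr ⟨x, y, i, hxy, rfl⟩, by simp, by simp⟩, ?_⟩
  rintro t ⟨ht, hx, hy⟩
  rcases boseTriples_iff.mp ht with ⟨a, rfl⟩ | ⟨a, b, k, -, rfl⟩
  · exact absurd ((mem_pointTriple.mp hx).trans (mem_pointTriple.mp hy).symm) hxy
  · exact levelTriple_eq_of_mem_of_mem hcomm hxy hx hy

theorem existsUnique_boseTriple_of_snd_eq_add_one (hcomm : ∀ x y, mul x y = mul y x)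
    (hidem : ∀ x, mul x x = x) (hquasi : ∀ a b, ∃! x, mul a x = b) {x y : Q} (hxy : x ≠ y)
    (i : ZMod 3) : ∃! t, BoseTriples mul t ∧ (x, i) ∈ t ∧ (y, i + 1) ∈ t := by
  obtain ⟨s, hs, hs_unique⟩ := hquasi x y
  have hxs : x ≠ s := by
    rintro rfl
    exact hxy (by rw [← hs, hidem])
  refine ⟨levelTriple mul x s i, ⟨Or.inr ⟨x, s, i, hxs, rfl⟩, by simp, by simp [hs]⟩, ?_⟩
  rintro t ⟨ht, hx, hy⟩
  rcases boseTriples_iff.mp ht with ⟨a, rfl⟩ | ⟨a, b, k, -, rfl⟩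
  · exact absurd ((mem_pointTriple.mp hx).trans (mem_pointTriple.mp hy).symm) hxy
  · obtain ⟨c, hc, heq⟩ := exists_levelTriple_eq_of_mem_of_mem_add_one hcomm hx hy
    rw [heq, hs_unique c hc]

end Bose

theorem stmt14_general (Q : Type) [DecidableEq Q] (mul : Q → Q → Q)
    (hcomm : ∀ x y : Q, mul x y = mul y x)
    (hidem : ∀ x : Q, mul x x = x)
    (hquasi : ∀ a b : Q, ∃! x : Q, mul a x = b) :
    ∀ a b : Q × ZMod 3, a ≠ b →
      ∃! t : Finset (Q × ZMod 3), BoseTriples mul t ∧ a ∈ t ∧ b ∈ t := by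
  rintro ⟨x, i⟩ ⟨y, j⟩ hne
  obtain rfl | hxy := eq_or_ne x y
  · exact Bose.existsUnique_boseTriple_of_fst_eq hcomm hidem hquasi fun hij => hne (by rw [hij])
  obtain rfl | hij := eq_or_ne i j
  · exact Bose.existsUnique_boseTriple_of_snd_eq hcomm hxy i
  obtain rfl | hji := eq_or_ne j (i + 1)
  · exact Bose.existsUnique_boseTriple_of_snd_eq_add_one hcomm hidem hquasi hxy i
  obtain rfl := Bose.zmod3_eq_add_one_of_ne_of_ne_add_one i j hij hji
  exact (existsUnique_congr fun t => and_congr_right' and_comm).mp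
    (Bose.existsUnique_boseTriple_of_snd_eq_add_one hcomm hidem hquasi hxy.symm j)

/-- Bose construction: if (Q,·) is a commutative idempotent quasigroup of
odd order v ≥ 3, then the triples P ∪ S on V = Q × Z₃ form a Steiner triple system of
order 3v: every pair of distinct points lies in exactly one triple. -/
theorem stmt14 (Q : Type) [Fintype Q] [DecidableEq Q] (mul : Q → Q → Q)
    (hcomm : ∀ x y : Q, mul x y = mul y x)
    (hidem : ∀ x : Q, mul x x = x)
    (hquasi : ∀ a b : Q, ∃! x : Q, mul a x = b)
    (hodd : Odd (Fintype.card Q)) (hcard : 3 ≤ Fintype.card Q) :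
    ∀ a b : Q × ZMod 3, a ≠ b →
      ∃! t : Finset (Q × ZMod 3), BoseTriples mul t ∧ a ∈ t ∧ b ∈ t :=
  stmt14_general Q mul hcomm hidem hquasi
end
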